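/- Let U be a nonempty finite set and λ a real number with 0 ≤ λ ≤ 1. Then the function assigning to each ordered pair (A, B) of subsets of U the value (1 − λ)^{|A \ B|} / (4 − λ)^{|U|} is nonnegative and sums to 1 over all pairs of subsets of U; i.e., it is a probability mass function on pairs of parent sets. -/

import Mathlib

/-!
Sorting each element of `U` into one of the four cells `A ∩ B`, `A \ B`, `B \ A`, `U \ (A ∪ B)`
shows `∑_{A, B ⊆ U} x ^ |A \ B| = (3 + x) ^ |U|`: only the cell `A \ B` is weighted by `x`.
For `x = 1 - λ` this is `(4 - λ) ^ |U|`, the normalising constant.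
-/

open Finset

namespace Finset

variable {ι R : Type*} [DecidableEq ι] [CommSemiring R]

theorem sum_powerset_pow_card_sdiff {A U : Finset ι} (hAU : A ⊆ U) (x : R) :
    ∑ B ∈ U.powerset, x ^ #(A \ B) = (1 + x) ^ #A * 2 ^ (#U - #A) := by
  have hterm : ∀ B ∈ U.powerset,
      x ^ #(A \ B) = (∏ _ ∈ B, (1 : R)) * ∏ i ∈ U \ B, if i ∈ A then x else 1 := by
    intro B _
    rw [prod_const_one, one_mul, prod_ite_mem, prod_const,
      sdiff_inter_right_comm, inter_eq_right.2 hAU]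
  calc ∑ B ∈ U.powerset, x ^ #(A \ B)
      = ∏ i ∈ U, (1 + if i ∈ A then x else 1) := by
        rw [sum_congr rfl hterm, prod_add]
    _ = ∏ i ∈ U, if i ∈ A then 1 + x else 2 := by
        refine prod_congr rfl fun i _ => ?_
        split_ifs <;> norm_num [one_add_one_eq_two]
    _ = (1 + x) ^ #A * 2 ^ (#U - #A) := by
        rw [prod_ite, filter_mem_eq_inter, inter_eq_right.2 hAU, filter_notMem_eq_sdiff,
          prod_const, prod_const, card_sdiff_of_subset hAU]

theorem sum_powerset_sum_powerset_pow_card_sdiff (U : Finset ι) (x : R) :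
    ∑ A ∈ U.powerset, ∑ B ∈ U.powerset, x ^ #(A \ B) = (3 + x) ^ #U := by
  rw [sum_congr rfl fun A hA => sum_powerset_pow_card_sdiff (mem_powerset.1 hA) x,
    sum_pow_mul_eq_add_pow]
  ring

end Finset

theorem transfer_prior_is_pmf_general
    {X : Type*} [DecidableEq X] (U : Finset X)
    (lam : ℝ) (h1 : lam ≤ 1) :
    (∀ A ∈ U.powerset, ∀ B ∈ U.powerset,
        0 ≤ (1 - lam) ^ (A \ B).card / (4 - lam) ^ U.card) ∧
    ∑ A ∈ U.powerset, ∑ B ∈ U.powerset,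
        (1 - lam) ^ (A \ B).card / (4 - lam) ^ U.card = 1 := by
  have h4 : 0 < 4 - lam := by linarith
  refine ⟨fun A _ B _ => div_nonneg (pow_nonneg (sub_nonneg.2 h1) _) (pow_nonneg h4.le _), ?_⟩
  simp_rw [← sum_div]
  rw [sum_powerset_sum_powerset_pow_card_sdiff, show 3 + (1 - lam) = 4 - lam by ring,
    div_self (pow_ne_zero _ h4.ne')]

/-- For a nonempty finite set `U` and `0 ≤ λ ≤ 1`, the geometric transfer prior
`(A, B) ↦ (1 - λ)^{|A \ B|} / (4 - λ)^{|U|}` is nonnegative and sums to 1 over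
all ordered pairs of subsets of `U`: it is a probability mass function. -/
theorem transfer_prior_is_pmf
    {X : Type*} [DecidableEq X] (U : Finset X) (hU : U.Nonempty)
    (lam : ℝ) (h0 : 0 ≤ lam) (h1 : lam ≤ 1) :
    (∀ A ∈ U.powerset, ∀ B ∈ U.powerset,
        0 ≤ (1 - lam) ^ (A \ B).card / (4 - lam) ^ U.card) ∧
    ∑ A ∈ U.powerset, ∑ B ∈ U.powerset,
        (1 - lam) ^ (A \ B).card / (4 - lam) ^ U.card = 1 :=
  transfer_prior_is_pmf_general U lam h1
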